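/- Let f : C₀• → C₁• be a morphism of bounded complexes of Hilbert spaces (with closed densely defined differentials) such that C₀• is acyclic with closed ranges. Then the mapping cone cone(f)• is isomorphic as a complex to the direct sum C₀•[1] ⊕ C₁•. -/

import Mathlib

/-!
Let `H = d₀⁺` be the Moore–Penrose pseudo-inverse of the differential of `C₀•`. It is bounded
by the closed graph theorem, because `d₀` is closed and, by exactness, its range is the closed
kernel of the next differential. Exactness also turns the two orthogonal projections
`d₀ d₀⁺ = P_{ran d₀}` and `d₀⁺ d₀ = 1 - P_{ker d₀}` into the homotopy identity
`d₀ H + H d₀ = 1`. Hence the shear `(x, y) ↦ (x, y + f (H x))` intertwines the cone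
differential `(x, y) ↦ (-d₀ x, f x + d₁ y)` with the split one `(x, y) ↦ (-d₀ x, d₁ y)`.
-/

open Filter

namespace LinearPMap

variable {𝕜 E F G : Type*} [RCLike 𝕜]
  [NormedAddCommGroup E] [InnerProductSpace 𝕜 E]
  [NormedAddCommGroup F] [InnerProductSpace 𝕜 F]
  [NormedAddCommGroup G] [InnerProductSpace 𝕜 G]

def ker (T : E →ₗ.[𝕜] F) : Submodule 𝕜 E :=
  (LinearMap.ker T.toFun).map T.domain.subtype

theorem ker_le_domain (T : E →ₗ.[𝕜] F) : T.ker ≤ T.domain := by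
  rintro _ ⟨x, -, rfl⟩
  exact x.2

theorem apply_eq_of_sub_mem_ker (T : E →ₗ.[𝕜] F) {u v : T.domain} (h : (u - v : E) ∈ T.ker) :
    T u = T v := by
  obtain ⟨k, hk, hku⟩ := h
  rw [← sub_eq_zero, ← map_sub, show u - v = k from Subtype.ext hku.symm]
  exact hk

theorem IsClosed.isClosed_ker {T : E →ₗ.[𝕜] F} (hT : T.IsClosed) :
    _root_.IsClosed (T.ker : Set E) := by
  have : (T.ker : Set E) = (fun x => (x, (0 : F))) ⁻¹' T.graph := by
    ext x
    simp [ker, and_comm]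
  rw [this]
  exact hT.preimage (by fun_prop)

theorem IsClosed.hasOrthogonalProjection_ker [CompleteSpace E] {T : E →ₗ.[𝕜] F} (hT : T.IsClosed) :
    T.ker.HasOrthogonalProjection :=
  haveI := hT.isClosed_ker.completeSpace_coe
  inferInstance

section PseudoInverse

variable (T : E →ₗ.[𝕜] F) [T.ker.HasOrthogonalProjection]

theorem ker_toFun_le_ker_starProjection_orthogonal :
    LinearMap.ker T.toFun ≤ LinearMap.ker (T.kerᗮ.starProjection.toLinearMap ∘ₗ T.domain.subtype) :=
  fun x hx => LinearMap.mem_ker.2 (Submodule.starProjection_orthogonal_apply_eq_zero ⟨x, hx, rfl⟩)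

variable [(LinearMap.range T.toFun).HasOrthogonalProjection]

/-- `T⁺ z` is the unique `w ∈ dom T ∩ (ker T)ᗮ` with `T w = P_{ran T} z`, built by lifting
`x ↦ P_{(ker T)ᗮ} x` through `dom T ⧸ ker T ≃ ran T`. -/
noncomputable def pseudoInverse : F →ₗ[𝕜] E :=
  (LinearMap.ker T.toFun).liftQ _ T.ker_toFun_le_ker_starProjection_orthogonal ∘ₗ
    T.toFun.quotKerEquivRange.symm.toLinearMap ∘ₗ
    (LinearMap.range T.toFun).orthogonalProjectionOnto.toLinearMap

theorem pseudoInverse_apply_eq {z : F} (w : T.domain)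
    (hw : T w = (LinearMap.range T.toFun).starProjection z) :
    T.pseudoInverse z = T.kerᗮ.starProjection w := by
  have : (LinearMap.range T.toFun).orthogonalProjectionOnto z =
      ⟨T.toFun w, LinearMap.mem_range_self _ w⟩ := Subtype.ext hw.symm
  simp only [pseudoInverse, LinearMap.comp_apply, ContinuousLinearMap.coe_coe, this,
    LinearEquiv.coe_coe]
  rw [LinearMap.quotKerEquivRange_symm_apply_image]
  rfl

theorem exists_pseudoInverse_eq (z : F) :
    ∃ w : T.domain, T.pseudoInverse z = T.kerᗮ.starProjection w ∧
      T w = (LinearMap.range T.toFun).starProjection z := by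
  obtain ⟨w, hw⟩ := ((LinearMap.range T.toFun).orthogonalProjectionOnto z).2
  exact ⟨w, T.pseudoInverse_apply_eq w hw, hw⟩

theorem pseudoInverse_mem_orthogonal (z : F) : T.pseudoInverse z ∈ T.kerᗮ := by
  obtain ⟨w, hw, -⟩ := T.exists_pseudoInverse_eq z
  exact hw ▸ Submodule.starProjection_apply_mem _ _

theorem pseudoInverse_mem_domain (z : F) : T.pseudoInverse z ∈ T.domain := by
  obtain ⟨w, hw, -⟩ := T.exists_pseudoInverse_eq z
  rw [hw, Submodule.starProjection_orthogonal_val]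
  exact sub_mem w.2 (T.ker_le_domain (Submodule.starProjection_apply_mem _ _))

theorem apply_pseudoInverse (z : F) :
    T ⟨T.pseudoInverse z, T.pseudoInverse_mem_domain z⟩ =
      (LinearMap.range T.toFun).starProjection z := by
  obtain ⟨w, hw, hTw⟩ := T.exists_pseudoInverse_eq z
  rw [← hTw]
  refine T.apply_eq_of_sub_mem_ker ?_
  simp [hw]

theorem pseudoInverse_apply (x : T.domain) :
    T.pseudoInverse (T x) = T.kerᗮ.starProjection x :=
  T.pseudoInverse_apply_eq x
    (Submodule.starProjection_eq_self_iff.2 (LinearMap.mem_range_self _ x)).symm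

theorem continuous_pseudoInverse [CompleteSpace E] [CompleteSpace F] (hT : T.IsClosed) :
    Continuous T.pseudoInverse := by
  refine T.pseudoInverse.continuous_of_seq_closed_graph fun u z w hu hw => ?_
  have hgraph : (w, (LinearMap.range T.toFun).starProjection z) ∈ T.graph := by
    refine hT.mem_of_tendsto (hw.prodMk_nhds
      (((LinearMap.range T.toFun).starProjection.continuous.tendsto z).comp hu))
      (Eventually.of_forall fun k => ?_)
    exact T.mem_graph_iff.2
      ⟨⟨_, T.pseudoInverse_mem_domain (u k)⟩, rfl, T.apply_pseudoInverse (u k)⟩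
  obtain ⟨v, rfl, hv⟩ := T.mem_graph_iff.1 hgraph
  have hperp : (v : E) ∈ T.kerᗮ := (Submodule.isClosed_orthogonal T.ker).mem_of_tendsto hw
    (Eventually.of_forall fun k => T.pseudoInverse_mem_orthogonal (u k))
  rw [T.pseudoInverse_apply_eq v hv, Submodule.starProjection_eq_self_iff.2 hperp]

end PseudoInverse

theorem apply_pseudoInverse_add_pseudoInverse_apply {S : E →ₗ.[𝕜] F} {T : F →ₗ.[𝕜] G}
    [S.ker.HasOrthogonalProjection] [(LinearMap.range S.toFun).HasOrthogonalProjection]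
    [T.ker.HasOrthogonalProjection] [(LinearMap.range T.toFun).HasOrthogonalProjection]
    (hST : LinearMap.range S.toFun = T.ker) (x : T.domain) :
    S ⟨S.pseudoInverse x, S.pseudoInverse_mem_domain x⟩ + T.pseudoInverse (T x) = x := by
  rw [apply_pseudoInverse, pseudoInverse_apply, Submodule.starProjection_orthogonal_val]
  simp only [hST, add_sub_cancel]

end LinearPMap

theorem cone_splits_over_acyclic_general
    (C₀ C₁ : ℤ → Type*)
    [∀ n, NormedAddCommGroup (C₀ n)] [∀ n, InnerProductSpace ℝ (C₀ n)]
    [∀ n, CompleteSpace (C₀ n)]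
    [∀ n, NormedAddCommGroup (C₁ n)] [∀ n, InnerProductSpace ℝ (C₁ n)]
    (d₀ : ∀ n : ℤ, C₀ n →ₗ.[ℝ] C₀ (n + 1))
    (d₁ : ∀ n : ℤ, C₁ n →ₗ.[ℝ] C₁ (n + 1))
    (hclosed₀ : ∀ n, (d₀ n).IsClosed)
    -- `C₀•` is acyclic with closed ranges: `Im(d₀ₙ) = Ker(d₀ₙ₊₁)`
    (hexact₀ : ∀ n, LinearMap.range (d₀ n).toFun =
      (LinearMap.ker (d₀ (n + 1)).toFun).map (d₀ (n + 1)).domain.subtype)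
    -- `f` is a morphism of complexes: bounded, preserves domains, commutes with `d`
    (f : ∀ n : ℤ, C₀ n →L[ℝ] C₁ n)
    (hf : ∀ n (x : C₀ n) (hx : x ∈ (d₀ n).domain),
      ∃ h : f n x ∈ (d₁ n).domain,
        (d₁ n) ⟨f n x, h⟩ = f (n + 1) ((d₀ n) ⟨x, hx⟩)) :
    -- the cone and the direct sum `C₀•[1] ⊕ C₁•` are isomorphic complexes:
    -- an isomorphism of the underlying graded Hilbert spaces preserving the
    -- (common) domains of the differentials in both directions and
    -- intertwining the cone differential with the direct-sum differential
    ∃ φ : ∀ n : ℤ, (C₀ (n + 1) × C₁ n) ≃L[ℝ] (C₀ (n + 1) × C₁ n),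
      ∀ (n : ℤ) (x : C₀ (n + 1)) (y : C₁ n)
        (hx : x ∈ (d₀ (n + 1)).domain) (hy : y ∈ (d₁ n).domain),
        ∃ (hu : (φ n (x, y)).1 ∈ (d₀ (n + 1)).domain)
          (hv : (φ n (x, y)).2 ∈ (d₁ n).domain),
          ((φ n).symm (x, y)).1 ∈ (d₀ (n + 1)).domain ∧
          ((φ n).symm (x, y)).2 ∈ (d₁ n).domain ∧
          φ (n + 1) (-(d₀ (n + 1)) ⟨x, hx⟩, f (n + 1) x + (d₁ n) ⟨y, hy⟩) =
            (-(d₀ (n + 1)) ⟨(φ n (x, y)).1, hu⟩, (d₁ n) ⟨(φ n (x, y)).2, hv⟩) := by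
  have : ∀ n, (d₀ n).ker.HasOrthogonalProjection := fun n =>
    (hclosed₀ n).hasOrthogonalProjection_ker
  have : ∀ n, (LinearMap.range (d₀ n).toFun).HasOrthogonalProjection := fun n => by
    rw [hexact₀ n]
    exact inferInstanceAs (d₀ (n + 1)).ker.HasOrthogonalProjection
  let H n : C₀ (n + 1) →L[ℝ] C₀ n :=
    ⟨(d₀ n).pseudoInverse, (d₀ n).continuous_pseudoInverse (hclosed₀ n)⟩
  choose hfdom hfcomm using hf
  refine ⟨fun n => .skewProd (.refl ℝ _) (.refl ℝ _) ((f n).comp (H n)), fun n x y hx hy => ?_⟩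
  have hHx : H n x ∈ (d₀ n).domain := (d₀ n).pseudoInverse_mem_domain x
  have hfHx := hfdom n _ hHx
  refine ⟨hx, add_mem hy hfHx, hx, sub_mem hy hfHx, Prod.ext rfl ?_⟩
  have hsplit : f (n + 1) (d₀ n ⟨H n x, hHx⟩) + f (n + 1) (H (n + 1) (d₀ (n + 1) ⟨x, hx⟩)) =
      f (n + 1) x := by
    rw [← map_add]
    exact congrArg (f (n + 1))
      (LinearPMap.apply_pseudoInverse_add_pseudoInverse_apply (hexact₀ n) ⟨x, hx⟩)
  calc f (n + 1) x + d₁ n ⟨y, hy⟩ + f (n + 1) (H (n + 1) (-d₀ (n + 1) ⟨x, hx⟩))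
      = d₁ n ⟨y, hy⟩ + f (n + 1) (d₀ n ⟨H n x, hHx⟩) := by
        rw [map_neg, map_neg, ← hsplit]
        abel
    _ = d₁ n (⟨y, hy⟩ + ⟨f n (H n x), hfHx⟩) := by rw [LinearPMap.map_add, hfcomm]

/-- **Splitting of the mapping cone over an acyclic Hilbert complex.**
Let `f : C₀• → C₁•` be a morphism of bounded complexes of Hilbert spaces with
closed densely defined differentials, and suppose `C₀•` is acyclic with closed
ranges.  Then the mapping cone `cone(f)ⁿ = C₀ⁿ⁺¹ × C₁ⁿ`, with differential
`(x, y) ↦ (-d₀ x, f x + d₁ y)`, is isomorphic as a complex of Hilbert spaces to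
the direct sum complex `C₀•[1] ⊕ C₁•`, whose differential is
`(x, y) ↦ (-d₀ x, d₁ y)`. -/
theorem cone_splits_over_acyclic
    (C₀ C₁ : ℤ → Type*)
    [∀ n, NormedAddCommGroup (C₀ n)] [∀ n, InnerProductSpace ℝ (C₀ n)]
    [∀ n, CompleteSpace (C₀ n)]
    [∀ n, NormedAddCommGroup (C₁ n)] [∀ n, InnerProductSpace ℝ (C₁ n)]
    [∀ n, CompleteSpace (C₁ n)]
    (d₀ : ∀ n : ℤ, C₀ n →ₗ.[ℝ] C₀ (n + 1))
    (d₁ : ∀ n : ℤ, C₁ n →ₗ.[ℝ] C₁ (n + 1))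
    (hbounded : ∃ N : ℕ, ∀ n : ℤ, (N : ℤ) < |n| →
      Subsingleton (C₀ n) ∧ Subsingleton (C₁ n))
    (hclosed₀ : ∀ n, (d₀ n).IsClosed) (hclosed₁ : ∀ n, (d₁ n).IsClosed)
    (hdense₀ : ∀ n, Dense ((d₀ n).domain : Set (C₀ n)))
    (hdense₁ : ∀ n, Dense ((d₁ n).domain : Set (C₁ n)))
    -- `C₁•` is a complex: `d₁² = 0`
    (hsq₁ : ∀ n (y : (d₁ n).domain),
      ∃ h2 : (d₁ n) y ∈ (d₁ (n + 1)).domain, (d₁ (n + 1)) ⟨(d₁ n) y, h2⟩ = 0)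
    -- `C₀•` is acyclic with closed ranges: `Im(d₀ₙ) = Ker(d₀ₙ₊₁)`
    (hexact₀ : ∀ n, LinearMap.range (d₀ n).toFun =
      (LinearMap.ker (d₀ (n + 1)).toFun).map (d₀ (n + 1)).domain.subtype)
    -- `f` is a morphism of complexes: bounded, preserves domains, commutes with `d`
    (f : ∀ n : ℤ, C₀ n →L[ℝ] C₁ n)
    (hf : ∀ n (x : C₀ n) (hx : x ∈ (d₀ n).domain),
      ∃ h : f n x ∈ (d₁ n).domain,
        (d₁ n) ⟨f n x, h⟩ = f (n + 1) ((d₀ n) ⟨x, hx⟩)) :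
    -- the cone and the direct sum `C₀•[1] ⊕ C₁•` are isomorphic complexes:
    -- an isomorphism of the underlying graded Hilbert spaces preserving the
    -- (common) domains of the differentials in both directions and
    -- intertwining the cone differential with the direct-sum differential
    ∃ φ : ∀ n : ℤ, (C₀ (n + 1) × C₁ n) ≃L[ℝ] (C₀ (n + 1) × C₁ n),
      ∀ (n : ℤ) (x : C₀ (n + 1)) (y : C₁ n)
        (hx : x ∈ (d₀ (n + 1)).domain) (hy : y ∈ (d₁ n).domain),
        ∃ (hu : (φ n (x, y)).1 ∈ (d₀ (n + 1)).domain)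
          (hv : (φ n (x, y)).2 ∈ (d₁ n).domain),
          ((φ n).symm (x, y)).1 ∈ (d₀ (n + 1)).domain ∧
          ((φ n).symm (x, y)).2 ∈ (d₁ n).domain ∧
          φ (n + 1) (-(d₀ (n + 1)) ⟨x, hx⟩, f (n + 1) x + (d₁ n) ⟨y, hy⟩) =
            (-(d₀ (n + 1)) ⟨(φ n (x, y)).1, hu⟩, (d₁ n) ⟨(φ n (x, y)).2, hv⟩) :=
  cone_splits_over_acyclic_general C₀ C₁ d₀ d₁ hclosed₀ hexact₀ f hf
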